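/- Let F0∈ℝ and let ψ,v∥,ρ be smooth on {R>0}×ℝ_φ×ℝ_Z. Set B := ((1/R)∂_Zψ)e_R+(F0/R)e_φ+(−(1/R)∂_Rψ)e_Z, ρ̂ := R²ρ, j := Δ*ψ, |B_pol|² := ((∂_Rψ)²+(∂_Zψ)²)/R². Then e_φ·∇×( R²ρ ((v∥B)·∇(v∥B)) ) = −[ρv∥²j, ψ] − [ρv∥(∇_pol v∥·∇_polψ), ψ] + (1/2)[ρ̂, v∥²|B_pol|²] − ∂_Z( ρ̂ (F0/R³) v∥ ∂_φ(v∥∂_Zψ) ) − ∂_R( ρ̂ (F0/R³) v∥ ∂_φ(v∥∂_Rψ) ) + ∂_Z( ρ̂ (F0²/R³) v∥² ), where ∇_pol a·∇_pol b := ∂_Ra∂_Rb+∂_Za∂_Zb. -/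

import Mathlib

noncomputable section
set_option linter.unusedVariables false

open Real

/-- Scalar fields on the cylindrical domain, as functions of `(R, φ, Z)`. -/
abbrev F3 := ℝ → ℝ → ℝ → ℝ

/-- Partial derivative in `R`. -/
def dR (f : F3) (R φ Z : ℝ) : ℝ := deriv (fun r => f r φ Z) R

/-- Partial derivative in `φ`. -/
def dP (f : F3) (R φ Z : ℝ) : ℝ := deriv (fun a => f R a Z) φ

/-- Partial derivative in `Z`. -/
def dZ (f : F3) (R φ Z : ℝ) : ℝ := deriv (fun z => f R φ z) Z

/-- Joint smoothness (C^∞) of a scalar field. -/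
def Smooth3 (f : F3) : Prop :=
  ContDiff ℝ (⊤ : ℕ∞) fun q : ℝ × ℝ × ℝ => f q.1 q.2.1 q.2.2

/-- Poisson bracket `[a,b] = ∂_R a ∂_Z b − ∂_Z a ∂_R b`. -/
def pb (a b : F3) (R φ Z : ℝ) : ℝ :=
  dR a R φ Z * dZ b R φ Z - dZ a R φ Z * dR b R φ Z

/-- Grad–Shafranov operator `Δ* f = R ∂_R((1/R) ∂_R f) + ∂_ZZ f`. -/
def GS (f : F3) (R φ Z : ℝ) : ℝ :=
  R * dR (fun r a z => (1 / r) * dR f r a z) R φ Z + dZ (dZ f) R φ Z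

/-- Poloidal Laplacian `Δ_pol f = (1/R) ∂_R(R ∂_R f) + ∂_ZZ f`. -/
def LapPol (f : F3) (R φ Z : ℝ) : ℝ :=
  (1 / R) * dR (fun r a z => r * dR f r a z) R φ Z + dZ (dZ f) R φ Z

/-- Cylindrical divergence `∇·F = (1/R)∂_R(R F_R) + (1/R)∂_φ F_φ + ∂_Z F_Z`. -/
def divC (FR Fφ FZ : F3) (R φ Z : ℝ) : ℝ :=
  (1 / R) * dR (fun r a z => r * FR r a z) R φ Z + (1 / R) * dP Fφ R φ Z + dZ FZ R φ Z

/-- Scalar advection `X·∇f = X_R ∂_R f + (X_φ/R) ∂_φ f + X_Z ∂_Z f`. -/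
def advS (XvR XvP XvZ f : F3) (R φ Z : ℝ) : ℝ :=
  XvR R φ Z * dR f R φ Z + XvP R φ Z / R * dP f R φ Z + XvZ R φ Z * dZ f R φ Z

/-- `e_R`-component of the vector advection `X·∇Y`. -/
def advVR (XvR XvP XvZ YvR YvP YvZ : F3) (R φ Z : ℝ) : ℝ :=
  advS XvR XvP XvZ YvR R φ Z - XvP R φ Z * YvP R φ Z / R

/-- `e_φ`-component of the vector advection `X·∇Y`. -/
def advVP (XvR XvP XvZ YvR YvP YvZ : F3) (R φ Z : ℝ) : ℝ :=
  advS XvR XvP XvZ YvP R φ Z + XvP R φ Z * YvR R φ Z / R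

/-- `e_Z`-component of the vector advection `X·∇Y`. -/
def advVZ (XvR XvP XvZ YvR YvP YvZ : F3) (R φ Z : ℝ) : ℝ :=
  advS XvR XvP XvZ YvZ R φ Z

/-- `e_R`-component of `B = (1/R)∇ψ×e_φ + (F0/R)e_φ`. -/
def BR (ψ : F3) : F3 := fun R φ Z => (1 / R) * dZ ψ R φ Z

/-- `e_φ`-component of the magnetic field. -/
def BP (F0 : ℝ) : F3 := fun R _ _ => F0 / R

/-- `e_Z`-component of the magnetic field. -/
def BZ (ψ : F3) : F3 := fun R φ Z => -(1 / R) * dR ψ R φ Z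

/-- `e_R`-component of `v_pol = −R∇u×e_φ`. -/
def vR (u : F3) : F3 := fun R φ Z => -R * dZ u R φ Z

/-- `e_Z`-component of `v_pol = −R∇u×e_φ`. -/
def vZ (u : F3) : F3 := fun R φ Z => R * dR u R φ Z

/-- The zero field. -/
def zeroF : F3 := fun _ _ _ => 0

/-- `|B|² = (F0² + (∂_Rψ)² + (∂_Zψ)²)/R²`. -/
def B2 (F0 : ℝ) (ψ : F3) : F3 := fun R φ Z =>
  (F0 ^ 2 + (dR ψ R φ Z) ^ 2 + (dZ ψ R φ Z) ^ 2) / R ^ 2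

/-- `|B_pol|² = ((∂_Rψ)² + (∂_Zψ)²)/R²`. -/
def Bpol2 (ψ : F3) : F3 := fun R φ Z => ((dR ψ R φ Z) ^ 2 + (dZ ψ R φ Z) ^ 2) / R ^ 2

/-- `ρ̂ = R²ρ`. -/
def rh (ρ : F3) : F3 := fun R φ Z => R ^ 2 * ρ R φ Z

/-- `∇_pol a · ∇_pol b`. -/
def gdot (a b : F3) : F3 := fun R φ Z =>
  dR a R φ Z * dR b R φ Z + dZ a R φ Z * dZ b R φ Z

/-- `e_R`-component of `v∥ B`. -/
def XR (ψ vpar : F3) : F3 := fun R φ Z => vpar R φ Z * BR ψ R φ Z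

/-- `e_φ`-component of `v∥ B`. -/
def XP (F0 : ℝ) (vpar : F3) : F3 := fun R φ Z => vpar R φ Z * BP F0 R φ Z

/-- `e_Z`-component of `v∥ B`. -/
def XZ (ψ vpar : F3) : F3 := fun R φ Z => vpar R φ Z * BZ ψ R φ Z

/-!
Write `w = v∥ B_pol` for the poloidal part of `v∥ B`, `K = |w|² / 2` and `ω = ∂_R w_Z − ∂_Z w_R`.
For the poloidal advection, Lamb's identity `w·∇w = ∇K + ω (w_R e_Z − w_Z e_R)` together with
`w = (v∥ / R)(∂_Zψ, −∂_Rψ)` gives `R²ρ (w·∇w) = ρ̂ ∇_pol K + G ∇_pol ψ` with `G = ρ̂ ω v∥ / R`,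
and `R ω = −(v∥ Δ*ψ + ∇_pol v∥ · ∇_pol ψ)`. As `∂_R(a ∂_Z b) − ∂_Z(a ∂_R b) = [a, b]` (the
mixed second derivatives of `b` cancel), the curl of this part is `[ρ̂, K] + [G, ψ]`. The
toroidal advection `(X_φ / R) ∂_φ` and the centrifugal term `−X_φ² / R` already match the `F0`
terms before the outer derivatives are taken.
-/

def halfSpace : Set (ℝ × ℝ × ℝ) := {q | 0 < q.1}

def uncurry3 (f : F3) : ℝ × ℝ × ℝ → ℝ := fun q => f q.1 q.2.1 q.2.2

/-- The factors `1 / R` are smooth only on `R > 0`, so the calculus below is set up on this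
half-space. -/
def SmoothOnHalfSpace (f : F3) : Prop :=
  ContDiffOn ℝ (⊤ : ℕ∞) (uncurry3 f) halfSpace

lemma isOpen_halfSpace : IsOpen halfSpace := isOpen_lt continuous_const continuous_fst

lemma Smooth3.smoothOnHalfSpace {f : F3} (hf : Smooth3 f) : SmoothOnHalfSpace f :=
  ContDiff.contDiffOn hf

namespace SmoothOnHalfSpace

variable {f g : F3}

lemma mul (hf : SmoothOnHalfSpace f) (hg : SmoothOnHalfSpace g) :
    SmoothOnHalfSpace fun r a z => f r a z * g r a z :=
  ContDiffOn.mul hf hg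

lemma add (hf : SmoothOnHalfSpace f) (hg : SmoothOnHalfSpace g) :
    SmoothOnHalfSpace fun r a z => f r a z + g r a z :=
  ContDiffOn.add hf hg

lemma sub (hf : SmoothOnHalfSpace f) (hg : SmoothOnHalfSpace g) :
    SmoothOnHalfSpace fun r a z => f r a z - g r a z :=
  ContDiffOn.sub hf hg

lemma neg (hf : SmoothOnHalfSpace f) : SmoothOnHalfSpace fun r a z => -f r a z :=
  ContDiffOn.neg hf

lemma pow (hf : SmoothOnHalfSpace f) (n : ℕ) : SmoothOnHalfSpace fun r a z => f r a z ^ n :=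
  ContDiffOn.pow hf n

lemma const (c : ℝ) : SmoothOnHalfSpace fun _ _ _ => c := contDiffOn_const

lemma inv : SmoothOnHalfSpace fun r _ _ => r⁻¹ :=
  contDiff_fst.contDiffOn.inv fun _ hq => ne_of_gt hq

lemma radius : SmoothOnHalfSpace fun r _ _ => r := contDiff_fst.contDiffOn

lemma div_const (hf : SmoothOnHalfSpace f) (c : ℝ) : SmoothOnHalfSpace fun r a z => f r a z / c :=
  ContDiffOn.div_const hf c

lemma div_pow_radius (hf : SmoothOnHalfSpace f) (n : ℕ) :
    SmoothOnHalfSpace fun r a z => f r a z / r ^ n :=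
  ContDiffOn.div hf (radius.pow n) fun _ hq => pow_ne_zero _ (ne_of_gt hq)

end SmoothOnHalfSpace

section PartialDerivatives

variable {f g : F3} {R φ Z : ℝ}

lemma SmoothOnHalfSpace.contDiffAt (hf : SmoothOnHalfSpace f) (hR : 0 < R) :
    ContDiffAt ℝ (⊤ : ℕ∞) (uncurry3 f) (R, φ, Z) :=
  ContDiffOn.contDiffAt hf (isOpen_halfSpace.mem_nhds (show (R, φ, Z) ∈ halfSpace from hR))

lemma SmoothOnHalfSpace.contDiffAt_fderiv (hf : SmoothOnHalfSpace f) (hR : 0 < R) :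
    ContDiffAt ℝ (⊤ : ℕ∞) (fderiv ℝ (uncurry3 f)) (R, φ, Z) :=
  (hf.contDiffAt hR).fderiv_right (by exact_mod_cast le_top)

lemma hasDerivAt_lineR (φ Z R : ℝ) :
    HasDerivAt (fun r : ℝ => ((r, φ, Z) : ℝ × ℝ × ℝ)) (1, 0, 0) R :=
  (hasDerivAt_id R).prodMk ((hasDerivAt_const R φ).prodMk (hasDerivAt_const R Z))

lemma hasDerivAt_lineP (R Z φ : ℝ) :
    HasDerivAt (fun a : ℝ => ((R, a, Z) : ℝ × ℝ × ℝ)) (0, 1, 0) φ :=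
  (hasDerivAt_const φ R).prodMk ((hasDerivAt_id φ).prodMk (hasDerivAt_const φ Z))

lemma hasDerivAt_lineZ (R φ Z : ℝ) :
    HasDerivAt (fun z : ℝ => ((R, φ, z) : ℝ × ℝ × ℝ)) (0, 0, 1) Z :=
  (hasDerivAt_const Z R).prodMk ((hasDerivAt_const Z φ).prodMk (hasDerivAt_id Z))

lemma SmoothOnHalfSpace.hasDerivAt_R (hf : SmoothOnHalfSpace f) (hR : 0 < R) :
    HasDerivAt (fun r => f r φ Z) (fderiv ℝ (uncurry3 f) (R, φ, Z) (1, 0, 0)) R :=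
  ((hf.contDiffAt hR).differentiableAt (by simp)).hasFDerivAt.comp_hasDerivAt (l := uncurry3 f) R
    (hasDerivAt_lineR φ Z R)

lemma SmoothOnHalfSpace.hasDerivAt_P (hf : SmoothOnHalfSpace f) (hR : 0 < R) :
    HasDerivAt (fun a => f R a Z) (fderiv ℝ (uncurry3 f) (R, φ, Z) (0, 1, 0)) φ :=
  ((hf.contDiffAt hR).differentiableAt (by simp)).hasFDerivAt.comp_hasDerivAt (l := uncurry3 f) φ
    (hasDerivAt_lineP R Z φ)

lemma SmoothOnHalfSpace.hasDerivAt_Z (hf : SmoothOnHalfSpace f) (hR : 0 < R) :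
    HasDerivAt (fun z => f R φ z) (fderiv ℝ (uncurry3 f) (R, φ, Z) (0, 0, 1)) Z :=
  ((hf.contDiffAt hR).differentiableAt (by simp)).hasFDerivAt.comp_hasDerivAt (l := uncurry3 f) Z
    (hasDerivAt_lineZ R φ Z)

lemma SmoothOnHalfSpace.hasDerivAt_R_fderiv (hf : SmoothOnHalfSpace f) (hR : 0 < R)
    (v : ℝ × ℝ × ℝ) :
    HasDerivAt (fun r => fderiv ℝ (uncurry3 f) (r, φ, Z) v)
      (fderiv ℝ (fderiv ℝ (uncurry3 f)) (R, φ, Z) (1, 0, 0) v) R := by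
  have h := ((hf.contDiffAt_fderiv hR).differentiableAt (by simp)).hasFDerivAt.comp_hasDerivAt R
    (hasDerivAt_lineR φ Z R)
  simpa using h.clm_apply (hasDerivAt_const R v)

lemma SmoothOnHalfSpace.hasDerivAt_Z_fderiv (hf : SmoothOnHalfSpace f) (hR : 0 < R)
    (v : ℝ × ℝ × ℝ) :
    HasDerivAt (fun z => fderiv ℝ (uncurry3 f) (R, φ, z) v)
      (fderiv ℝ (fderiv ℝ (uncurry3 f)) (R, φ, Z) (0, 0, 1) v) Z := by
  have h := ((hf.contDiffAt_fderiv hR).differentiableAt (by simp)).hasFDerivAt.comp_hasDerivAt Z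
    (hasDerivAt_lineZ R φ Z)
  simpa using h.clm_apply (hasDerivAt_const Z v)

lemma dR_eq_fderiv (hf : SmoothOnHalfSpace f) (hR : 0 < R) :
    dR f R φ Z = fderiv ℝ (uncurry3 f) (R, φ, Z) (1, 0, 0) := (hf.hasDerivAt_R hR).deriv

lemma dP_eq_fderiv (hf : SmoothOnHalfSpace f) (hR : 0 < R) :
    dP f R φ Z = fderiv ℝ (uncurry3 f) (R, φ, Z) (0, 1, 0) := (hf.hasDerivAt_P hR).deriv

lemma dZ_eq_fderiv (hf : SmoothOnHalfSpace f) (hR : 0 < R) :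
    dZ f R φ Z = fderiv ℝ (uncurry3 f) (R, φ, Z) (0, 0, 1) := (hf.hasDerivAt_Z hR).deriv

lemma SmoothOnHalfSpace.fderiv_apply (hf : SmoothOnHalfSpace f) (v : ℝ × ℝ × ℝ) :
    ContDiffOn ℝ (⊤ : ℕ∞) (fun q => fderiv ℝ (uncurry3 f) q v) halfSpace :=
  (hf.fderiv_of_isOpen isOpen_halfSpace (by exact_mod_cast le_top)).clm_apply contDiffOn_const

lemma SmoothOnHalfSpace.dR (hf : SmoothOnHalfSpace f) : SmoothOnHalfSpace (dR f) :=
  (hf.fderiv_apply _).congr fun q hq => dR_eq_fderiv hf hq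

lemma SmoothOnHalfSpace.dP (hf : SmoothOnHalfSpace f) : SmoothOnHalfSpace (dP f) :=
  (hf.fderiv_apply _).congr fun q hq => dP_eq_fderiv hf hq

lemma SmoothOnHalfSpace.dZ (hf : SmoothOnHalfSpace f) : SmoothOnHalfSpace (dZ f) :=
  (hf.fderiv_apply _).congr fun q hq => dZ_eq_fderiv hf hq

lemma dR_congr_of_pos (h : ∀ r a z, 0 < r → f r a z = g r a z) (hR : 0 < R) :
    dR f R φ Z = dR g R φ Z :=
  Filter.EventuallyEq.deriv_eq <| (eventually_gt_nhds hR).mono fun r hr => h r φ Z hr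

lemma dZ_congr_of_pos (h : ∀ r a z, 0 < r → f r a z = g r a z) (hR : 0 < R) :
    dZ f R φ Z = dZ g R φ Z :=
  congrArg (deriv · Z) (funext fun z => h R φ z hR)

lemma dR_dZ_comm (hf : SmoothOnHalfSpace f) (hR : 0 < R) :
    dR (dZ f) R φ Z = dZ (dR f) R φ Z := by
  have hRZ : dR (dZ f) R φ Z = fderiv ℝ (fderiv ℝ (uncurry3 f)) (R, φ, Z) (1, 0, 0) (0, 0, 1) := by
    rw [dR_congr_of_pos (fun r a z hr => dZ_eq_fderiv hf hr) hR]
    exact (hf.hasDerivAt_R_fderiv hR _).deriv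
  have hZR : dZ (dR f) R φ Z = fderiv ℝ (fderiv ℝ (uncurry3 f)) (R, φ, Z) (0, 0, 1) (1, 0, 0) := by
    have h : (fun z => dR f R φ z) = fun z => fderiv ℝ (uncurry3 f) (R, φ, z) (1, 0, 0) :=
      funext fun z => dR_eq_fderiv hf hR
    rw [dZ, h]
    exact (hf.hasDerivAt_Z_fderiv hR _).deriv
  rw [hRZ, hZR]
  exact (hf.contDiffAt hR).isSymmSndFDerivAt
    (by rw [minSmoothness_of_isRCLikeNormedField]; exact WithTop.coe_le_coe.mpr le_top) _ _

lemma dR_mul (hf : SmoothOnHalfSpace f) (hg : SmoothOnHalfSpace g) (hR : 0 < R) :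
    dR (fun r a z => f r a z * g r a z) R φ Z = dR f R φ Z * g R φ Z + f R φ Z * dR g R φ Z :=
  deriv_mul (hf.hasDerivAt_R hR).differentiableAt (hg.hasDerivAt_R hR).differentiableAt

lemma dP_mul (hf : SmoothOnHalfSpace f) (hg : SmoothOnHalfSpace g) (hR : 0 < R) :
    dP (fun r a z => f r a z * g r a z) R φ Z = dP f R φ Z * g R φ Z + f R φ Z * dP g R φ Z :=
  deriv_mul (hf.hasDerivAt_P hR).differentiableAt (hg.hasDerivAt_P hR).differentiableAt

lemma dZ_mul (hf : SmoothOnHalfSpace f) (hg : SmoothOnHalfSpace g) (hR : 0 < R) :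
    dZ (fun r a z => f r a z * g r a z) R φ Z = dZ f R φ Z * g R φ Z + f R φ Z * dZ g R φ Z :=
  deriv_mul (hf.hasDerivAt_Z hR).differentiableAt (hg.hasDerivAt_Z hR).differentiableAt

lemma dR_add (hf : SmoothOnHalfSpace f) (hg : SmoothOnHalfSpace g) (hR : 0 < R) :
    dR (fun r a z => f r a z + g r a z) R φ Z = dR f R φ Z + dR g R φ Z :=
  deriv_add (hf.hasDerivAt_R hR).differentiableAt (hg.hasDerivAt_R hR).differentiableAt

lemma dZ_add (hf : SmoothOnHalfSpace f) (hg : SmoothOnHalfSpace g) (hR : 0 < R) :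
    dZ (fun r a z => f r a z + g r a z) R φ Z = dZ f R φ Z + dZ g R φ Z :=
  deriv_add (hf.hasDerivAt_Z hR).differentiableAt (hg.hasDerivAt_Z hR).differentiableAt

lemma dR_sub (hf : SmoothOnHalfSpace f) (hg : SmoothOnHalfSpace g) (hR : 0 < R) :
    dR (fun r a z => f r a z - g r a z) R φ Z = dR f R φ Z - dR g R φ Z :=
  deriv_sub (hf.hasDerivAt_R hR).differentiableAt (hg.hasDerivAt_R hR).differentiableAt

lemma dZ_sub (hf : SmoothOnHalfSpace f) (hg : SmoothOnHalfSpace g) (hR : 0 < R) :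
    dZ (fun r a z => f r a z - g r a z) R φ Z = dZ f R φ Z - dZ g R φ Z :=
  deriv_sub (hf.hasDerivAt_Z hR).differentiableAt (hg.hasDerivAt_Z hR).differentiableAt

lemma dR_pow (hf : SmoothOnHalfSpace f) (hR : 0 < R) (n : ℕ) :
    dR (fun r a z => f r a z ^ n) R φ Z = n * f R φ Z ^ (n - 1) * dR f R φ Z :=
  deriv_fun_pow (hf.hasDerivAt_R hR).differentiableAt n

lemma dZ_pow (hf : SmoothOnHalfSpace f) (hR : 0 < R) (n : ℕ) :
    dZ (fun r a z => f r a z ^ n) R φ Z = n * f R φ Z ^ (n - 1) * dZ f R φ Z :=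
  deriv_fun_pow (hf.hasDerivAt_Z hR).differentiableAt n

lemma dR_neg : dR (fun r a z => -f r a z) R φ Z = -dR f R φ Z := deriv.neg

lemma dP_neg : dP (fun r a z => -f r a z) R φ Z = -dP f R φ Z := deriv.neg

lemma dZ_neg : dZ (fun r a z => -f r a z) R φ Z = -dZ f R φ Z := deriv.neg

lemma dR_inv : dR (fun r _ _ => r⁻¹) R φ Z = -(R ^ 2)⁻¹ := deriv_inv

lemma dR_div_const (c : ℝ) : dR (fun r a z => f r a z / c) R φ Z = dR f R φ Z / c :=
  deriv_div_const c

lemma dZ_div_const (c : ℝ) : dZ (fun r a z => f r a z / c) R φ Z = dZ f R φ Z / c :=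
  deriv_div_const c

lemma dR_const (c : ℝ) : dR (fun _ _ _ => c) R φ Z = 0 := deriv_const _ _

lemma dP_eq_zero_of_indep (h : ℝ → ℝ → ℝ) : dP (fun r _ z => h r z) R φ Z = 0 := deriv_const _ _

lemma dZ_eq_zero_of_indep (h : ℝ → ℝ → ℝ) : dZ (fun r a _ => h r a) R φ Z = 0 := deriv_const _ _

end PartialDerivatives

section Bracket

variable {f g h : F3} {R φ Z : ℝ}

lemma dR_mul_dZ_sub_dZ_mul_dR (hf : SmoothOnHalfSpace f) (hg : SmoothOnHalfSpace g) (hR : 0 < R) :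
    dR (fun r a z => f r a z * dZ g r a z) R φ Z - dZ (fun r a z => f r a z * dR g r a z) R φ Z
      = pb f g R φ Z := by
  rw [dR_mul hf hg.dZ hR, dZ_mul hf hg.dR hR, dR_dZ_comm hg hR, pb]
  ring

lemma pb_div_const (c : ℝ) : pb f (fun r a z => g r a z / c) R φ Z = pb f g R φ Z / c := by
  rw [pb, pb, dR_div_const, dZ_div_const]
  ring

lemma pb_neg_sub (hf : SmoothOnHalfSpace f) (hg : SmoothOnHalfSpace g) (hR : 0 < R) :
    pb (fun r a z => -f r a z - g r a z) h R φ Z = -pb f h R φ Z - pb g h R φ Z := by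
  rw [pb, pb, pb, dR_sub hf.neg hg hR, dZ_sub hf.neg hg hR, dR_neg, dZ_neg]
  ring

end Bracket

def polKineticEnergy (ψ vpar : F3) : F3 := fun r a z => vpar r a z ^ 2 * Bpol2 ψ r a z / 2

/-- `ρ̂ ω v∥ / R`, where `ω = ∂_R(v∥ B_Z) − ∂_Z(v∥ B_R)` is the vorticity of the poloidal flow
`v∥ B_pol`. -/
def vortexCoeff (ψ vpar ρ : F3) : F3 := fun r a z =>
  -(ρ r a z * vpar r a z ^ 2 * GS ψ r a z) - ρ r a z * vpar r a z * gdot vpar ψ r a z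

namespace SmoothOnHalfSpace

variable {f g : F3}

lemma rh (hf : SmoothOnHalfSpace f) : SmoothOnHalfSpace (rh f) := (radius.pow 2).mul hf

lemma GS (hf : SmoothOnHalfSpace f) : SmoothOnHalfSpace (GS f) := by
  unfold _root_.GS
  simp only [div_eq_mul_inv, one_mul]
  exact (radius.mul (inv.mul hf.dR).dR).add hf.dZ.dZ

lemma gdot (hf : SmoothOnHalfSpace f) (hg : SmoothOnHalfSpace g) :
    SmoothOnHalfSpace (gdot f g) :=
  (hf.dR.mul hg.dR).add (hf.dZ.mul hg.dZ)

lemma polKineticEnergy {ψ vpar : F3} (hψ : SmoothOnHalfSpace ψ) (hv : SmoothOnHalfSpace vpar) :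
    SmoothOnHalfSpace (polKineticEnergy ψ vpar) :=
  ((hv.pow 2).mul (((hψ.dR.pow 2).add (hψ.dZ.pow 2)).div_pow_radius 2)).div_const 2

lemma vortexCoeff {ψ vpar ρ : F3} (hψ : SmoothOnHalfSpace ψ) (hv : SmoothOnHalfSpace vpar)
    (hρ : SmoothOnHalfSpace ρ) : SmoothOnHalfSpace (vortexCoeff ψ vpar ρ) :=
  ((hρ.mul (hv.pow 2)).mul hψ.GS).neg.sub ((hρ.mul hv).mul (hv.gdot hψ))

end SmoothOnHalfSpace

lemma rsq_mul_advVZ_parallel (F0 : ℝ) {ψ vpar ρ : F3} (hψ : SmoothOnHalfSpace ψ)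
    (hv : SmoothOnHalfSpace vpar) {r a z : ℝ} (hr : 0 < r) :
    r ^ 2 * ρ r a z * advVZ (XR ψ vpar) (XP F0 vpar) (XZ ψ vpar)
        (XR ψ vpar) (XP F0 vpar) (XZ ψ vpar) r a z
      = rh ρ r a z * dZ (polKineticEnergy ψ vpar) r a z + vortexCoeff ψ vpar ρ r a z * dZ ψ r a z
        - rh ρ r a z * (F0 / r ^ 3) * vpar r a z
            * dP (fun r' a' z' => vpar r' a' z' * dR ψ r' a' z') r a z := by
  unfold advVZ advS XR XP XZ BR BP BZ polKineticEnergy vortexCoeff Bpol2 GS gdot rh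
  simp only [div_eq_mul_inv, one_mul, neg_mul, mul_neg, ← inv_pow]
  simp (maxDischargeDepth := 20) only [dR_mul, dZ_mul, dP_mul, dZ_add, dR_neg, dZ_neg, dP_neg,
    dZ_pow, dR_inv, dP_eq_zero_of_indep, dZ_eq_zero_of_indep,
    SmoothOnHalfSpace.mul, SmoothOnHalfSpace.add, SmoothOnHalfSpace.pow,
    SmoothOnHalfSpace.const, SmoothOnHalfSpace.inv, SmoothOnHalfSpace.dR, SmoothOnHalfSpace.dZ,
    hψ, hv, hr, Nat.cast_ofNat, Nat.reduceSub, pow_one]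
  field_simp
  ring

lemma rsq_mul_advVR_parallel (F0 : ℝ) {ψ vpar ρ : F3} (hψ : SmoothOnHalfSpace ψ)
    (hv : SmoothOnHalfSpace vpar) {r a z : ℝ} (hr : 0 < r) :
    r ^ 2 * ρ r a z * advVR (XR ψ vpar) (XP F0 vpar) (XZ ψ vpar)
        (XR ψ vpar) (XP F0 vpar) (XZ ψ vpar) r a z
      = rh ρ r a z * dR (polKineticEnergy ψ vpar) r a z + vortexCoeff ψ vpar ρ r a z * dR ψ r a z
        + rh ρ r a z * (F0 / r ^ 3) * vpar r a z
            * dP (fun r' a' z' => vpar r' a' z' * dZ ψ r' a' z') r a z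
        - rh ρ r a z * (F0 ^ 2 / r ^ 3) * vpar r a z ^ 2 := by
  unfold advVR advS XR XP XZ BR BP BZ polKineticEnergy vortexCoeff Bpol2 GS gdot rh
  simp only [div_eq_mul_inv, one_mul, neg_mul, mul_neg, ← inv_pow]
  simp (maxDischargeDepth := 20) only [dR_mul, dZ_mul, dP_mul, dR_add, dR_pow, dR_inv, dR_const,
    dP_eq_zero_of_indep, dZ_eq_zero_of_indep, dR_dZ_comm,
    SmoothOnHalfSpace.mul, SmoothOnHalfSpace.add, SmoothOnHalfSpace.pow,
    SmoothOnHalfSpace.const, SmoothOnHalfSpace.inv, SmoothOnHalfSpace.dR, SmoothOnHalfSpace.dZ,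
    hψ, hv, hr, Nat.cast_ofNat, Nat.reduceSub, pow_one]
  field_simp
  ring

lemma pb_polKineticEnergy (f ψ vpar : F3) (R φ Z : ℝ) :
    pb f (polKineticEnergy ψ vpar) R φ Z
      = 1 / 2 * pb f (fun r a z => vpar r a z ^ 2 * Bpol2 ψ r a z) R φ Z :=
  (pb_div_const 2).trans (one_div_mul_eq_div _ _).symm

lemma pb_vortexCoeff {ψ vpar ρ : F3} (hψ : SmoothOnHalfSpace ψ) (hv : SmoothOnHalfSpace vpar)
    (hρ : SmoothOnHalfSpace ρ) {R φ Z : ℝ} (hR : 0 < R) :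
    pb (vortexCoeff ψ vpar ρ) ψ R φ Z
      = -pb (fun r a z => ρ r a z * vpar r a z ^ 2 * GS ψ r a z) ψ R φ Z
        - pb (fun r a z => ρ r a z * vpar r a z * gdot vpar ψ r a z) ψ R φ Z :=
  pb_neg_sub ((hρ.mul (hv.pow 2)).mul hψ.GS) ((hρ.mul hv).mul (hv.gdot hψ)) hR

/-- `e_φ`-component of the curl of `R²ρ ((v∥B)·∇(v∥B))`. -/
theorem curl_phi_of_parallel_advection (F0 : ℝ) (ψ vpar ρ : F3)
    (hψ : Smooth3 ψ) (hv : Smooth3 vpar) (hρ : Smooth3 ρ) :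
    ∀ R φ Z : ℝ, 0 < R →
      dR (fun r a z => r ^ 2 * ρ r a z
            * advVZ (XR ψ vpar) (XP F0 vpar) (XZ ψ vpar)
                (XR ψ vpar) (XP F0 vpar) (XZ ψ vpar) r a z) R φ Z
        - dZ (fun r a z => r ^ 2 * ρ r a z
            * advVR (XR ψ vpar) (XP F0 vpar) (XZ ψ vpar)
                (XR ψ vpar) (XP F0 vpar) (XZ ψ vpar) r a z) R φ Z
      = -pb (fun r a z => ρ r a z * vpar r a z ^ 2 * GS ψ r a z) ψ R φ Z
        - pb (fun r a z => ρ r a z * vpar r a z * gdot vpar ψ r a z) ψ R φ Z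
        + (1 / 2) * pb (rh ρ) (fun r a z => vpar r a z ^ 2 * Bpol2 ψ r a z) R φ Z
        - dZ (fun r a z => rh ρ r a z * (F0 / r ^ 3) * vpar r a z
            * dP (fun r' a' z' => vpar r' a' z' * dZ ψ r' a' z') r a z) R φ Z
        - dR (fun r a z => rh ρ r a z * (F0 / r ^ 3) * vpar r a z
            * dP (fun r' a' z' => vpar r' a' z' * dR ψ r' a' z') r a z) R φ Z
        + dZ (fun r a z => rh ρ r a z * (F0 ^ 2 / r ^ 3) * vpar r a z ^ 2) R φ Z := by
  intro R φ Z hR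
  replace hψ := hψ.smoothOnHalfSpace
  replace hv := hv.smoothOnHalfSpace
  replace hρ := hρ.smoothOnHalfSpace
  rw [dR_congr_of_pos (fun r a z hr => rsq_mul_advVZ_parallel F0 hψ hv hr) hR,
    dZ_congr_of_pos (fun r a z hr => rsq_mul_advVR_parallel F0 hψ hv hr) hR]
  have hK := SmoothOnHalfSpace.polKineticEnergy hψ hv
  have hG := SmoothOnHalfSpace.vortexCoeff hψ hv hρ
  simp (maxDischargeDepth := 20) only [dR_add, dR_sub, dZ_add, dZ_sub,
    SmoothOnHalfSpace.mul, SmoothOnHalfSpace.add, SmoothOnHalfSpace.pow, SmoothOnHalfSpace.const,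
    SmoothOnHalfSpace.div_pow_radius, SmoothOnHalfSpace.rh,
    SmoothOnHalfSpace.dR, SmoothOnHalfSpace.dZ, SmoothOnHalfSpace.dP, hψ, hv, hρ, hK, hG, hR]
  linear_combination dR_mul_dZ_sub_dZ_mul_dR (φ := φ) (Z := Z) hρ.rh hK hR
    + dR_mul_dZ_sub_dZ_mul_dR (φ := φ) (Z := Z) hG hψ hR
    + pb_polKineticEnergy (rh ρ) ψ vpar R φ Z + pb_vortexCoeff hψ hv hρ hR
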